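/- arXiv:1410.1415 — 2 statements merged into one kernel-verified Lean document; each statement's English description precedes it below -/
import Mathlib

section
/- For the phase function φ(ξ) = (x/t)·ξ - ξ₁/|ξ| on ℝ² \ {0} (with x ∈ ℝ² and t > 0 fixed), the determinant of the Hessian matrix of φ with respect to ξ equals -ξ₂²/|ξ|⁶. -/
/-!
The linear part of the phase disappears after two derivatives. Writing `r = |ξ|`, the second
partials of `-ξ₁ / r` are `3ξ₁ξ₂² / r⁵`, `ξ₁(ξ₁² - 2ξ₂²) / r⁵` and, for both mixed ones,
`ξ₂(ξ₂² - 2ξ₁²) / r⁵`, so the determinant is `-ξ₂²(ξ₁² + ξ₂²)² / r¹⁰ = -ξ₂² / r⁶`.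
-/

/-- First partial derivative (in the first variable) of a two-variable function. -/
noncomputable def pd1 (f : ℝ → ℝ → ℝ) : ℝ → ℝ → ℝ := fun a b => deriv (fun u => f u b) a

/-- Second partial derivative (in the second variable) of a two-variable function. -/
noncomputable def pd2 (f : ℝ → ℝ → ℝ) : ℝ → ℝ → ℝ := fun a b => deriv (fun v => f a v) b

open Real Filter Topology

lemma HasDerivAt.sqrt_pow {f : ℝ → ℝ} {f' x : ℝ} (hf : HasDerivAt f f' x) (hx : 0 < f x)
    (n : ℕ) : HasDerivAt (fun y => √(f y) ^ n) (n * f' * √(f x) ^ n / (2 * f x)) x := by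
  refine ((hf.sqrt hx.ne').pow n).congr_deriv ?_
  have hs : 0 < √(f x) := sqrt_pos.2 hx
  have hsq := sq_sqrt hx.le
  generalize √(f x) = s at hs hsq ⊢
  rw [← hsq]
  rcases n with _ | n
  · simp
  · field_simp
    simp only [Nat.add_sub_cancel]
    ring

section
variable {f g : ℝ → ℝ → ℝ} {a b : ℝ}

lemma pd1_congr_of_sq_add_sq_pos (hfg : ∀ a b, 0 < a ^ 2 + b ^ 2 → f a b = g a b)
    (h : 0 < a ^ 2 + b ^ 2) : pd1 f a b = pd1 g a b := by
  have hnear : ∀ᶠ u in 𝓝 a, 0 < u ^ 2 + b ^ 2 :=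
    (continuous_id.pow 2 |>.add continuous_const).continuousAt.eventually (eventually_gt_nhds h)
  exact EventuallyEq.deriv_eq (hnear.mono fun u hu => hfg u b hu)

lemma pd2_congr_of_sq_add_sq_pos (hfg : ∀ a b, 0 < a ^ 2 + b ^ 2 → f a b = g a b)
    (h : 0 < a ^ 2 + b ^ 2) : pd2 f a b = pd2 g a b := by
  have hnear : ∀ᶠ v in 𝓝 b, 0 < a ^ 2 + v ^ 2 :=
    (continuous_const.add (continuous_id.pow 2)).continuousAt.eventually (eventually_gt_nhds h)
  exact EventuallyEq.deriv_eq (hnear.mono fun v hv => hfg a v hv)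

end

noncomputable def phase (x1 x2 t : ℝ) (a b : ℝ) : ℝ :=
  (x1 * a + x2 * b) / t - a / √(a ^ 2 + b ^ 2)

section
variable {x1 x2 t a b : ℝ}

/- In each computation below the root `√(a ^ 2 + b ^ 2)` is abstracted to `s`: the derivative
formulas only need `s > 0` and `s ^ 2 = a ^ 2 + b ^ 2`. -/

lemma pd1_phase (h : 0 < a ^ 2 + b ^ 2) :
    pd1 (phase x1 x2 t) a b = x1 / t - b ^ 2 / √(a ^ 2 + b ^ 2) ^ 3 := by
  have hr := ((hasDerivAt_pow 2 a).add_const (b ^ 2)).sqrt h.ne'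
  have hφ : HasDerivAt (fun u => phase x1 x2 t u b) _ a :=
    ((((hasDerivAt_id a).const_mul x1).add_const (x2 * b)).div_const t).sub
      ((hasDerivAt_id a).div hr (sqrt_pos.2 h).ne')
  rw [pd1, hφ.deriv]
  have hs := sqrt_pos.2 h
  have hsq := sq_sqrt h.le
  generalize √(a ^ 2 + b ^ 2) = s at hs hsq ⊢
  field_simp
  rw [hsq]
  norm_num
  ring

lemma pd2_phase (h : 0 < a ^ 2 + b ^ 2) :
    pd2 (phase x1 x2 t) a b = x2 / t + a * b / √(a ^ 2 + b ^ 2) ^ 3 := by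
  have hr := ((hasDerivAt_pow 2 b).const_add (a ^ 2)).sqrt h.ne'
  have hφ : HasDerivAt (fun v => phase x1 x2 t a v) _ b :=
    ((((hasDerivAt_id b).const_mul x2).const_add (x1 * a)).div_const t).sub
      ((hasDerivAt_const b a).div hr (sqrt_pos.2 h).ne')
  rw [pd2, hφ.deriv]
  have hs := sqrt_pos.2 h
  generalize √(a ^ 2 + b ^ 2) = s at hs ⊢
  field_simp
  norm_num
  ring

lemma pd1_pd1_phase (h : 0 < a ^ 2 + b ^ 2) :
    pd1 (pd1 (phase x1 x2 t)) a b = 3 * a * b ^ 2 / √(a ^ 2 + b ^ 2) ^ 5 := by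
  rw [pd1_congr_of_sq_add_sq_pos (fun a b h => pd1_phase h) h]
  have hr := ((hasDerivAt_pow 2 a).add_const (b ^ 2)).sqrt_pow h 3
  have hs := sqrt_pos.2 h
  have hφ : HasDerivAt (fun u => x1 / t - b ^ 2 / √(u ^ 2 + b ^ 2) ^ 3) _ a :=
    (hasDerivAt_const a (x1 / t)).sub ((hasDerivAt_const a (b ^ 2)).div hr (by positivity))
  rw [pd1, hφ.deriv]
  have hsq := sq_sqrt h.le
  generalize √(a ^ 2 + b ^ 2) = s at hs hsq ⊢
  field_simp
  rw [hsq]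
  norm_num
  ring

lemma pd2_pd1_phase (h : 0 < a ^ 2 + b ^ 2) :
    pd2 (pd1 (phase x1 x2 t)) a b = b * (b ^ 2 - 2 * a ^ 2) / √(a ^ 2 + b ^ 2) ^ 5 := by
  rw [pd2_congr_of_sq_add_sq_pos (fun a b h => pd1_phase h) h]
  have hr := ((hasDerivAt_pow 2 b).const_add (a ^ 2)).sqrt_pow h 3
  have hs := sqrt_pos.2 h
  have hφ : HasDerivAt (fun v => x1 / t - v ^ 2 / √(a ^ 2 + v ^ 2) ^ 3) _ b :=
    (hasDerivAt_const b (x1 / t)).sub ((hasDerivAt_pow 2 b).div hr (by positivity))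
  rw [pd2, hφ.deriv]
  have hsq := sq_sqrt h.le
  generalize √(a ^ 2 + b ^ 2) = s at hs hsq ⊢
  field_simp
  rw [hsq]
  norm_num
  ring

lemma pd1_pd2_phase (h : 0 < a ^ 2 + b ^ 2) :
    pd1 (pd2 (phase x1 x2 t)) a b = b * (b ^ 2 - 2 * a ^ 2) / √(a ^ 2 + b ^ 2) ^ 5 := by
  rw [pd1_congr_of_sq_add_sq_pos (fun a b h => pd2_phase h) h]
  have hr := ((hasDerivAt_pow 2 a).add_const (b ^ 2)).sqrt_pow h 3
  have hs := sqrt_pos.2 h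
  have hφ : HasDerivAt (fun u => x2 / t + u * b / √(u ^ 2 + b ^ 2) ^ 3) _ a :=
    (((hasDerivAt_id a).mul_const b).div hr (by positivity)).const_add (x2 / t)
  rw [pd1, hφ.deriv]
  have hsq := sq_sqrt h.le
  generalize √(a ^ 2 + b ^ 2) = s at hs hsq ⊢
  field_simp
  rw [hsq]
  norm_num
  ring

lemma pd2_pd2_phase (h : 0 < a ^ 2 + b ^ 2) :
    pd2 (pd2 (phase x1 x2 t)) a b = a * (a ^ 2 - 2 * b ^ 2) / √(a ^ 2 + b ^ 2) ^ 5 := by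
  rw [pd2_congr_of_sq_add_sq_pos (fun a b h => pd2_phase h) h]
  have hr := ((hasDerivAt_pow 2 b).const_add (a ^ 2)).sqrt_pow h 3
  have hs := sqrt_pos.2 h
  have hφ : HasDerivAt (fun v => x2 / t + a * v / √(a ^ 2 + v ^ 2) ^ 3) _ b :=
    (((hasDerivAt_id b).const_mul a).div hr (by positivity)).const_add (x2 / t)
  rw [pd2, hφ.deriv]
  have hsq := sq_sqrt h.le
  generalize √(a ^ 2 + b ^ 2) = s at hs hsq ⊢
  field_simp
  rw [hsq]
  norm_num
  ring

end

theorem hessian_det_phase_general (x1 x2 t : ℝ) (ξ1 ξ2 : ℝ) (hξ : ¬(ξ1 = 0 ∧ ξ2 = 0)) :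
    let φ : ℝ → ℝ → ℝ := fun a b => (x1 * a + x2 * b) / t - a / Real.sqrt (a ^ 2 + b ^ 2)
    pd1 (pd1 φ) ξ1 ξ2 * pd2 (pd2 φ) ξ1 ξ2 - pd1 (pd2 φ) ξ1 ξ2 * pd2 (pd1 φ) ξ1 ξ2
      = -(ξ2 ^ 2) / (Real.sqrt (ξ1 ^ 2 + ξ2 ^ 2)) ^ 6 := by
  intro φ
  have h : 0 < ξ1 ^ 2 + ξ2 ^ 2 := by
    rcases not_and_or.mp hξ with h | h <;> positivity
  rw [show φ = phase x1 x2 t from rfl, pd1_pd1_phase h, pd2_pd2_phase h, pd1_pd2_phase h,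
    pd2_pd1_phase h]
  have hs := sqrt_pos.2 h
  have hsq := sq_sqrt h.le
  generalize √(ξ1 ^ 2 + ξ2 ^ 2) = s at hs hsq ⊢
  field_simp
  linear_combination ξ2 ^ 2 * (s ^ 2 + ξ1 ^ 2 + ξ2 ^ 2) * hsq

/-- For the phase `φ(ξ) = (x·ξ)/t - ξ₁/|ξ|` on `ℝ² \ {0}` (with `x ∈ ℝ²`, `t > 0` fixed),
the determinant of the Hessian of `φ` in `ξ` equals `-ξ₂²/|ξ|⁶`. -/
theorem hessian_det_phase (x1 x2 t : ℝ) (ht : 0 < t) (ξ1 ξ2 : ℝ) (hξ : ¬(ξ1 = 0 ∧ ξ2 = 0)) :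
    let φ : ℝ → ℝ → ℝ := fun a b => (x1 * a + x2 * b) / t - a / Real.sqrt (a ^ 2 + b ^ 2)
    pd1 (pd1 φ) ξ1 ξ2 * pd2 (pd2 φ) ξ1 ξ2 - pd1 (pd2 φ) ξ1 ξ2 * pd2 (pd1 φ) ξ1 ξ2
      = -(ξ2 ^ 2) / (Real.sqrt (ξ1 ^ 2 + ξ2 ^ 2)) ^ 6 :=
  hessian_det_phase_general x1 x2 t ξ1 ξ2 hξ
end

section
/- If f : ℝ² → ℂ is a Schwartz function whose Fourier transform f̂ is radial (i.e. f̂(ξ) depends only on |ξ|), then the value of e^{R₁t}f at the origin is f(0) · (1/2π) ∫₀^{2π} e^{-it cos θ} dθ, where e^{R₁t}f(x) = ∫_{ℝ²} f̂(ξ) e^{i x·ξ - it ξ₁/|ξ|} dξ (with Fourier conventions such that f(x) = ∫ f̂(ξ)e^{ix·ξ}dξ). -/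
open MeasureTheory Complex

/-! In polar coordinates `ξ = (r cos θ, r sin θ)` the radial factor `f̂(ξ) = f̂(r, 0)` and the
multiplier `e^{-itξ₁/|ξ|} = e^{-it cos θ}` separate, so the integral is
`(∫₀^∞ r f̂(r, 0) dr) · ∫ e^{-it cos θ} dθ`; the same computation with multiplier `1` turns
Fourier inversion at the origin into `f(0) = 2π ∫₀^∞ r f̂(r, 0) dr`. -/

open Set

theorem integral_mul_eq_of_radial_of_angular {𝕜 : Type*} [RCLike 𝕜] {h φ : ℝ × ℝ → 𝕜}
    {ψ : ℝ → 𝕜} (hh : ∀ ξ η : ℝ × ℝ, ξ.1 ^ 2 + ξ.2 ^ 2 = η.1 ^ 2 + η.2 ^ 2 → h ξ = h η)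
    (hφ : ∀ r θ : ℝ, 0 < r → φ (r * Real.cos θ, r * Real.sin θ) = ψ θ) :
    ∫ ξ, h ξ * φ ξ
      = (∫ r in Ioi (0 : ℝ), (r : 𝕜) * h (r, 0)) * ∫ θ in Ioo (-Real.pi) Real.pi, ψ θ := by
  -- No integrability is needed: the polar change of variables and the splitting of a product
  -- integral both hold unconditionally for the Bochner integral.
  have hpolar : ∀ p ∈ polarCoord.target, p.1 • (h (polarCoord.symm p) * φ (polarCoord.symm p))
      = ((p.1 : 𝕜) * h (p.1, 0)) * ψ p.2 := by
    rintro ⟨r, θ⟩ ⟨hr, -⟩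
    have hrad : h (r * Real.cos θ, r * Real.sin θ) = h (r, 0) :=
      hh _ _ (by linear_combination r ^ 2 * Real.cos_sq_add_sin_sq θ)
    rw [polarCoord_symm_apply, hrad, hφ r θ hr, RCLike.real_smul_eq_coe_mul, mul_assoc]
  rw [← integral_comp_polarCoord_symm,
    setIntegral_congr_fun polarCoord.open_target.measurableSet hpolar, polarCoord_target,
    Measure.volume_eq_prod]
  exact setIntegral_prod_mul (fun r : ℝ => (r : 𝕜) * h (r, 0)) ψ _ _

theorem integral_eq_two_pi_mul_of_radial {𝕜 : Type*} [RCLike 𝕜] {h : ℝ × ℝ → 𝕜}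
    (hh : ∀ ξ η : ℝ × ℝ, ξ.1 ^ 2 + ξ.2 ^ 2 = η.1 ^ 2 + η.2 ^ 2 → h ξ = h η) :
    ∫ ξ, h ξ = 2 * Real.pi * ∫ r in Ioi (0 : ℝ), (r : 𝕜) * h (r, 0) := by
  have hpolar := integral_mul_eq_of_radial_of_angular (φ := fun _ => 1) (ψ := fun _ => 1) hh
    (fun _ _ _ => rfl)
  simp only [mul_one] at hpolar
  rw [hpolar, setIntegral_const, Real.volume_real_Ioo_of_le (by linarith [Real.pi_pos]),
    RCLike.real_smul_eq_coe_mul]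
  push_cast
  ring

theorem Function.Periodic.setIntegral_Ioo_neg_pi_pi {E : Type*} [NormedAddCommGroup E]
    [NormedSpace ℝ E] {f : ℝ → E} (hf : f.Periodic (2 * Real.pi)) :
    ∫ θ in Ioo (-Real.pi) Real.pi, f θ = ∫ θ in 0..(2 * Real.pi), f θ := by
  have hshift := hf.intervalIntegral_add_eq 0 (-Real.pi)
  rw [zero_add, show -Real.pi + 2 * Real.pi = Real.pi by ring] at hshift
  rw [hshift, intervalIntegral.integral_of_le (by linarith [Real.pi_pos]),
    integral_Ioc_eq_integral_Ioo]

theorem mul_cos_div_sqrt_sq_add_sq {r : ℝ} (hr : 0 < r) (θ : ℝ) :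
    r * Real.cos θ / √((r * Real.cos θ) ^ 2 + (r * Real.sin θ) ^ 2) = Real.cos θ := by
  rw [show (r * Real.cos θ) ^ 2 + (r * Real.sin θ) ^ 2 = r ^ 2 by
      linear_combination r ^ 2 * Real.cos_sq_add_sin_sq θ,
    Real.sqrt_sq hr.le, mul_div_cancel_left₀ _ hr.ne']

theorem semigroup_at_origin_radial_general (f : SchwartzMap (ℝ × ℝ) ℂ) (t : ℝ)
    (fhat : ℝ × ℝ → ℂ)
    (hradial : ∀ ξ η : ℝ × ℝ, ξ.1 ^ 2 + ξ.2 ^ 2 = η.1 ^ 2 + η.2 ^ 2 → fhat ξ = fhat η)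
    (hinv : ∀ x : ℝ × ℝ,
      f x = ∫ ξ : ℝ × ℝ, fhat ξ * Complex.exp (Complex.I * (x.1 * ξ.1 + x.2 * ξ.2))) :
    (∫ ξ : ℝ × ℝ, fhat ξ *
        Complex.exp (-(Complex.I * t * ξ.1 / Real.sqrt (ξ.1 ^ 2 + ξ.2 ^ 2))))
      = f 0 * (1 / (2 * Real.pi : ℝ) : ℝ) *
        ∫ θ in (0 : ℝ)..(2 * Real.pi), Complex.exp (-(Complex.I * t * Real.cos θ)) := by
  have hf0 : f 0 = 2 * Real.pi * ∫ r in Ioi (0 : ℝ), (r : ℂ) * fhat (r, 0) := by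
    rw [hinv 0]
    simpa using integral_eq_two_pi_mul_of_radial hradial
  have hperiodic : Function.Periodic (fun θ => exp (-(I * t * Real.cos θ))) (2 * Real.pi) :=
    fun θ => by simp only [Real.cos_add_two_pi]
  rw [integral_mul_eq_of_radial_of_angular hradial (ψ := fun θ => exp (-(I * t * Real.cos θ)))
      fun r θ hr => by rw [mul_div_assoc, ← ofReal_div, mul_cos_div_sqrt_sq_add_sq hr],
    hperiodic.setIntegral_Ioo_neg_pi_pi, hf0]
  push_cast
  field_simp
  exact mul_comm _ _

/-- If `f : ℝ² → ℂ` is a Schwartz function whose Fourier transform `f̂` (convention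
`f̂(ξ) = (2π)⁻² ∫ f(x) e^{-ix·ξ} dx`, so that `f(x) = ∫ f̂(ξ) e^{ix·ξ} dξ`) is radial,
then `e^{R₁t}f(0) = ∫ f̂(ξ) e^{-itξ₁/|ξ|} dξ = f(0) · (1/(2π)) ∫₀^{2π} e^{-it cos θ} dθ`. -/
theorem semigroup_at_origin_radial (f : SchwartzMap (ℝ × ℝ) ℂ) (t : ℝ)
    (fhat : ℝ × ℝ → ℂ)
    (hfhat : ∀ ξ : ℝ × ℝ,
      fhat ξ = ((2 * Real.pi : ℝ) : ℂ) ^ (-2 : ℤ) *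
        ∫ x : ℝ × ℝ, f x * Complex.exp (-(Complex.I * (x.1 * ξ.1 + x.2 * ξ.2))))
    (hradial : ∀ ξ η : ℝ × ℝ, ξ.1 ^ 2 + ξ.2 ^ 2 = η.1 ^ 2 + η.2 ^ 2 → fhat ξ = fhat η)
    (hinv : ∀ x : ℝ × ℝ,
      f x = ∫ ξ : ℝ × ℝ, fhat ξ * Complex.exp (Complex.I * (x.1 * ξ.1 + x.2 * ξ.2))) :
    (∫ ξ : ℝ × ℝ, fhat ξ *
        Complex.exp (-(Complex.I * t * ξ.1 / Real.sqrt (ξ.1 ^ 2 + ξ.2 ^ 2))))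
      = f 0 * (1 / (2 * Real.pi : ℝ) : ℝ) *
        ∫ θ in (0 : ℝ)..(2 * Real.pi), Complex.exp (-(Complex.I * t * Real.cos θ)) :=
  semigroup_at_origin_radial_general f t fhat hradial hinv
end
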